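/- For any real x > 0 and a > 0, (Γ(a+1)/(2πi)) ∫_{1+iℝ} e^{zx}/z^{a+1} dz = x^a, and for x ≤ 0 the integral equals 0. -/

import Mathlib

/-!
Let `g(t) = t ^ a e^{-t}` for `t > 0` and `g(t) = 0` for `t ≤ 0`. The Laplace integral
`∫₀^∞ t ^ (s - 1) e^{-bt} dt = Γ(s) / b ^ s` is known for real `b > 0`; both sides are holomorphic
in `b` on `Re b > 0`, so it holds there too. Taking `b = 1 + 2πiξ` gives
`𝓕 g ξ = Γ(a + 1) / (1 + 2πiξ) ^ (a + 1)`, which is integrable since `a > 0`; and `g` is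
continuous since `a > 0`. Fourier inversion at `x`, after the substitution `t = 2πξ` and pulling
`e^x` out of `e^{(1 + it)x}`, turns the contour integral into `e^x g(x)`.
-/

open Complex MeasureTheory Real Set Filter Topology Metric FourierTransform

section LaplaceCpow

variable {s b : ℂ}

lemma norm_cpow_mul_cexp_neg_mul {t : ℝ} (ht : 0 < t) (s b : ℂ) :
    ‖(t : ℂ) ^ s * cexp (-(b * t))‖ = t ^ s.re * Real.exp (-(b.re * t)) := by
  rw [norm_mul, norm_cpow_eq_rpow_re_of_pos ht, norm_exp]
  simp

lemma integrableOn_cpow_mul_cexp_neg_mul (hs : 0 < s.re) (hb : 0 < b.re) :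
    IntegrableOn (fun t : ℝ => (t : ℂ) ^ (s - 1) * cexp (-(b * t))) (Ioi 0) := by
  have hbound : IntegrableOn (fun t : ℝ => t ^ (s.re - 1) * Real.exp (-(b.re * t))) (Ioi 0) := by
    simpa using integrableOn_rpow_mul_exp_neg_mul_rpow (p := 1) (by linarith) one_pos hb
  refine hbound.mono' (by fun_prop) ?_
  filter_upwards [ae_restrict_mem measurableSet_Ioi] with t ht
  rw [norm_cpow_mul_cexp_neg_mul ht]
  simp

lemma hasDerivAt_cpow_mul_cexp_neg_mul {t : ℝ} (ht : 0 < t) (s b : ℂ) :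
    HasDerivAt (fun b : ℂ => (t : ℂ) ^ (s - 1) * cexp (-(b * t)))
      (-((t : ℂ) ^ s * cexp (-(b * t)))) b := by
  have hexp : HasDerivAt (fun b : ℂ => cexp (-(b * t))) (cexp (-(b * t)) * -t) b := by
    simpa using ((hasDerivAt_id b).mul_const (t : ℂ)).neg.cexp
  refine (hexp.const_mul ((t : ℂ) ^ (s - 1))).congr_deriv ?_
  rw [cpow_sub _ _ (ofReal_ne_zero.2 ht.ne'), cpow_one]
  field_simp [ofReal_ne_zero.2 ht.ne']

lemma differentiableOn_integral_cpow_mul_cexp_neg_mul (hs : 0 < s.re) :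
    DifferentiableOn ℂ (fun b : ℂ => ∫ t in Ioi (0 : ℝ), (t : ℂ) ^ (s - 1) * cexp (-(b * t)))
      {b | 0 < b.re} := by
  intro b₀ (hb₀ : 0 < b₀.re)
  set c := b₀.re / 2 with hc_def
  have hc : 0 < c := half_pos hb₀
  have hball : ∀ b ∈ ball b₀ c, c < b.re := fun b hb => by
    have := (abs_lt.1 ((abs_re_le_norm (b - b₀)).trans_lt (mem_ball_iff_norm.1 hb))).1
    simp only [sub_re] at this
    linarith [hc_def]
  have hderiv_int : IntegrableOn (fun t : ℝ => (t : ℂ) ^ s * cexp (-(b₀ * t))) (Ioi 0) := by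
    simpa using
      integrableOn_cpow_mul_cexp_neg_mul (s := s + 1) (by rw [add_re, one_re]; linarith) hb₀
  have hbound_int : IntegrableOn (fun t : ℝ => (t : ℂ) ^ s * cexp (-(c * t))) (Ioi 0) := by
    simpa using integrableOn_cpow_mul_cexp_neg_mul (s := s + 1) (b := c)
      (by rw [add_re, one_re]; linarith) (by simpa using hc)
  refine (hasDerivAt_integral_of_dominated_loc_of_deriv_le
    (μ := volume.restrict (Ioi 0)) (F := fun b (t : ℝ) => (t : ℂ) ^ (s - 1) * cexp (-(b * t)))
    (F' := fun b (t : ℝ) => -((t : ℂ) ^ s * cexp (-(b * t))))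
    (bound := fun t : ℝ => ‖(t : ℂ) ^ s * cexp (-(c * t))‖)
    (ball_mem_nhds b₀ hc) (Eventually.of_forall fun b => by fun_prop)
    (integrableOn_cpow_mul_cexp_neg_mul hs hb₀) hderiv_int.neg.aestronglyMeasurable ?_
    hbound_int.norm ?_).2.differentiableAt.differentiableWithinAt
  · filter_upwards [ae_restrict_mem measurableSet_Ioi] with t (ht : 0 < t) b hb
    rw [norm_neg, norm_cpow_mul_cexp_neg_mul ht, norm_cpow_mul_cexp_neg_mul ht, ofReal_re]
    gcongr
    exact (hball b hb).le
  · filter_upwards [ae_restrict_mem measurableSet_Ioi] with t (ht : 0 < t) b _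
    exact hasDerivAt_cpow_mul_cexp_neg_mul ht s b

theorem integral_cpow_mul_cexp_neg_mul_Ioi (hs : 0 < s.re) (hb : 0 < b.re) :
    ∫ t in Ioi (0 : ℝ), (t : ℂ) ^ (s - 1) * cexp (-(b * t)) = Gamma s / b ^ s := by
  have hU : IsOpen {b : ℂ | 0 < b.re} := isOpen_lt continuous_const continuous_re
  have hrhs : DifferentiableOn ℂ (fun b : ℂ => Gamma s / b ^ s) {b | 0 < b.re} :=
    fun b (hb : 0 < b.re) => (differentiableAt_const _).div
      (differentiableAt_id.cpow (differentiableAt_const s) (Or.inl hb))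
      (cpow_ne_zero_iff.2 (Or.inl (ne_of_apply_ne re (by simpa using hb.ne'))))
      |>.differentiableWithinAt
  have hreal : ∀ r : ℝ, 0 < r →
      ∫ t in Ioi (0 : ℝ), (t : ℂ) ^ (s - 1) * cexp (-(r * t)) = Gamma s / (r : ℂ) ^ s := by
    intro r hr
    rw [integral_cpow_mul_exp_neg_mul_Ioi hs hr, one_div,
      inv_cpow _ _ (by rw [arg_ofReal_of_nonneg hr.le]; exact pi_ne_zero.symm), div_eq_inv_mul]
  refine ((differentiableOn_integral_cpow_mul_cexp_neg_mul hs).analyticOnNhd hU)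
    |>.eqOn_of_preconnected_of_frequently_eq (hrhs.analyticOnNhd hU)
      (convex_halfSpace_re_gt 0).isPreconnected (z₀ := 1) (by simp) ?_ hb
  have hofReal : Tendsto ((↑) : ℝ → ℂ) (𝓝[≠] 1) (𝓝[≠] 1) :=
    continuous_ofReal.continuousWithinAt.tendsto_nhdsWithin fun _ _ ↦ by simp_all
  exact hofReal.frequently
    ((eventually_nhdsWithin_of_eventually_nhds (eventually_gt_nhds one_pos)).mono hreal).frequently

end LaplaceCpow

section PowExpNegIoi

variable {a : ℝ}

noncomputable def powExpNegIoi (a : ℝ) : ℝ → ℂ :=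
  (Ioi 0).indicator fun t => (t : ℂ) ^ (a : ℂ) * cexp (-t)

lemma integrable_powExpNegIoi (ha : -1 < a) : Integrable (powExpNegIoi a) :=
  (integrable_indicator_iff measurableSet_Ioi).2 <| by
    simpa using integrableOn_cpow_mul_cexp_neg_mul (s := a + 1) (b := 1)
      (by rw [add_re, one_re, ofReal_re]; linarith) (by simp)

lemma continuous_powExpNegIoi (ha : 0 < a) : Continuous (powExpNegIoi a) := by
  refine continuous_indicator (fun t ht => ?_) (Continuous.continuousOn ?_)
  · rw [frontier_Ioi, mem_singleton_iff] at ht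
    simp [ht, ha.ne']
  · exact (continuous_ofReal_cpow_const (by simpa using ha)).mul (by fun_prop)

lemma fourier_powExpNegIoi (ha : -1 < a) (ξ : ℝ) :
    𝓕 (powExpNegIoi a) ξ =
      Complex.Gamma (a + 1) / (1 + (2 * π * ξ : ℝ) * I) ^ ((a : ℂ) + 1) := by
  have hlaplace := integral_cpow_mul_cexp_neg_mul_Ioi (s := a + 1)
    (b := 1 + (2 * π * ξ : ℝ) * I) (by rw [add_re, one_re, ofReal_re]; linarith) (by simp)
  rw [add_sub_cancel_right] at hlaplace
  rw [Real.fourier_real_eq_integral_exp_smul, ← hlaplace, ← integral_indicator measurableSet_Ioi]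
  congr 1 with t
  by_cases ht : t ∈ Ioi 0
  · simp only [powExpNegIoi, indicator_of_mem ht, smul_eq_mul]
    rw [mul_left_comm, ← Complex.exp_add]
    congr 2
    push_cast
    ring
  · simp [powExpNegIoi, indicator_of_notMem ht]

lemma norm_one_add_mul_I_cpow (y r : ℝ) :
    ‖(1 + y * I) ^ (r : ℂ)‖ = (1 + ‖y‖ ^ 2) ^ (r / 2) := by
  rw [norm_cpow_real, ← ofReal_one, norm_add_mul_I, sqrt_eq_rpow, ← rpow_mul (by positivity),
    Real.norm_eq_abs, sq_abs]
  ring_nf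

lemma integrable_inv_one_add_mul_I_cpow {r : ℝ} (hr : 1 < r) :
    Integrable fun y : ℝ => ((1 + y * I) ^ (r : ℂ))⁻¹ := by
  refine (integrable_rpow_neg_one_add_norm_sq (E := ℝ) (μ := volume) (r := r) (by simpa)).mono'
    (Measurable.aestronglyMeasurable (by fun_prop)) (ae_of_all _ fun y => le_of_eq ?_)
  rw [norm_inv, norm_one_add_mul_I_cpow, neg_div, rpow_neg (by positivity)]

lemma integrable_fourier_powExpNegIoi (ha : 0 < a) : Integrable (𝓕 (powExpNegIoi a)) := by
  have hscaled := ((integrable_inv_one_add_mul_I_cpow (r := a + 1) (by linarith)).comp_mul_left'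
    (R := 2 * π) (by positivity)).const_mul (Complex.Gamma (a + 1))
  refine hscaled.congr (ae_of_all _ fun ξ => ?_)
  simp only [fourier_powExpNegIoi (by linarith : -1 < a)]
  push_cast
  rfl

lemma gamma_mul_integral_cexp_mul_I_div_one_add_mul_I_cpow (ha : 0 < a) (x : ℝ) :
    Complex.Gamma (a + 1) * ∫ t : ℝ, cexp (t * x * I) / (1 + t * I) ^ ((a : ℂ) + 1)
      = 2 * π * powExpNegIoi a x := by
  set F : ℝ → ℂ := fun t => cexp (t * x * I) / (1 + t * I) ^ ((a : ℂ) + 1)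
  have hinv := congrFun ((continuous_powExpNegIoi ha).fourierInv_fourier_eq
    (integrable_powExpNegIoi (by linarith)) (integrable_fourier_powExpNegIoi ha)) x
  have hscale :
      𝓕⁻ (𝓕 (powExpNegIoi a)) x = ((2 : ℂ) * π)⁻¹ * (Complex.Gamma (a + 1) * ∫ t, F t) :=
    calc 𝓕⁻ (𝓕 (powExpNegIoi a)) x = ∫ v : ℝ, Complex.Gamma (a + 1) * F (2 * π * v) := by
          rw [Real.fourierInv_eq']
          congr 1 with v
          simp only [fourier_powExpNegIoi (by linarith : -1 < a), smul_eq_mul, F,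
            RCLike.inner_apply, conj_trivial]
          push_cast
          ring_nf
      _ = ((2 : ℂ) * π)⁻¹ * (Complex.Gamma (a + 1) * ∫ t, F t) := by
          rw [integral_const_mul, Measure.integral_comp_mul_left, abs_of_pos (by positivity),
            real_smul]
          push_cast
          ring
  rw [← hinv, hscale]
  field_simp

end PowExpNegIoi

lemma gamma_div_two_pi_I_mul_integral_exp_div_cpow {a : ℝ} (ha : 0 < a) (x : ℝ) :
    (Real.Gamma (a + 1) : ℂ) / (2 * Real.pi * Complex.I) *
        ∫ t : ℝ,
          Complex.exp ((1 + t * Complex.I) * x) / (1 + t * Complex.I) ^ ((a : ℂ) + 1) *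
            Complex.I = cexp x * powExpNegIoi a x := by
  have hshift : ∀ t : ℝ, cexp ((1 + t * I) * x) / (1 + t * I) ^ ((a : ℂ) + 1) * I
      = I * cexp x * (cexp (t * x * I) / (1 + t * I) ^ ((a : ℂ) + 1)) := fun t => by
    rw [show ((1 : ℂ) + t * I) * x = x + t * x * I by ring, Complex.exp_add]
    ring
  have hΓ : (Real.Gamma (a + 1) : ℂ) = Complex.Gamma (a + 1) := by
    rw [← Gamma_ofReal]; push_cast; rfl
  simp_rw [hshift]
  rw [integral_const_mul, hΓ, div_mul_eq_mul_div, mul_left_comm,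
    gamma_mul_integral_cexp_mul_I_div_one_add_mul_I_cpow ha]
  field_simp

/-- `(Γ(a+1)/(2πi)) ∫_{1+iℝ} e^{zx}/z^{a+1} dz = x^a` for `x > 0`, and the
integral vanishes for `x ≤ 0`.  Contour `z = 1 + i t`, `dz = i dt`,
principal branch of `z^(a+1)`. -/
theorem contour_integral_exp_div_cpow (x a : ℝ) (ha : 0 < a) :
    (0 < x →
      (Real.Gamma (a + 1) : ℂ) / (2 * Real.pi * Complex.I) *
          ∫ t : ℝ,
            Complex.exp ((1 + t * Complex.I) * x) / (1 + t * Complex.I) ^ ((a : ℂ) + 1) *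
              Complex.I = ((x ^ a : ℝ) : ℂ)) ∧
    (x ≤ 0 →
      (Real.Gamma (a + 1) : ℂ) / (2 * Real.pi * Complex.I) *
          ∫ t : ℝ,
            Complex.exp ((1 + t * Complex.I) * x) / (1 + t * Complex.I) ^ ((a : ℂ) + 1) *
              Complex.I = 0) := by
  simp only [gamma_div_two_pi_I_mul_integral_exp_div_cpow ha x, powExpNegIoi]
  refine ⟨fun hx => ?_, fun hx => ?_⟩
  · rw [indicator_of_mem (show x ∈ Ioi 0 from hx), ofReal_cpow hx.le, mul_left_comm,
      ← Complex.exp_add, add_neg_cancel, Complex.exp_zero, mul_one]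
  · rw [indicator_of_notMem (show x ∉ Ioi 0 from not_lt.2 hx), mul_zero]
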